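/- Let X be a chain connected uniform space and x₀ ∈ X. Then X is uniformly joinable if and only if the endpoint projection π_X : GP(X,x₀) → X generates the uniform structure of X. -/

import Mathlib

/-!
`π(E*) ⊆ E` holds for every entourage `E`, because `E*`-close paths have `E`-close endpoints.
If `X` is uniformly joinable, an `E`-short path `p` from `b` to `a` makes `(a, b)` the endpoint
pair of the `E*`-close paths `q·p` and `q`, for any `q` from `x₀` to `b` (such `q` exist by chain
connectedness), so `π(E*)` contains an entourage. Conversely, if `(p, q) ∈ E*` for a symmetric
entourage `E`, then `p⁻¹·q` is `E`-short: its `E`-term is homotopic to `e(a,b)` followed by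
`q⁻¹·q`, and the backtracking `q⁻¹·q` retracts by Rips moves.
-/

open UniformSpace Filter Function
open scoped Uniformity

universe u v

variable {X : Type u} {Y : Type v}

/-- An `E`-chain: consecutive pairs belong to `E`. -/
def IsEChain (E : Set (X × X)) (l : List X) : Prop :=
  l.Chain' fun a b => (a, b) ∈ E

/-- Homotopy rel endpoints of edge-paths in the Rips complex `R(X,E)`. -/
inductive RipsHtpy (E : Set (X × X)) : List X → List X → Prop
  | refl (l : List X) : RipsHtpy E l l
  | symm {l₁ l₂ : List X} : RipsHtpy E l₁ l₂ → RipsHtpy E l₂ l₁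
  | trans {l₁ l₂ l₃ : List X} : RipsHtpy E l₁ l₂ → RipsHtpy E l₂ l₃ → RipsHtpy E l₁ l₃
  | ins (l₁ l₂ : List X) (a v b : X) :
      (a, v) ∈ E → (v, b) ∈ E → (a, b) ∈ E →
      RipsHtpy E (l₁ ++ a :: b :: l₂) (l₁ ++ a :: v :: b :: l₂)

/-- `E`-homotopy of chains (endpoints may move within `E`). -/
def EHomotopic (E : Set (X × X)) (c d : List X) : Prop :=
  ∃ xc xd yc yd : X, c.head? = some xc ∧ d.head? = some xd ∧
    c.getLast? = some yc ∧ d.getLast? = some yd ∧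
    (xc, xd) ∈ E ∧ (yc, yd) ∈ E ∧
    RipsHtpy E c (xc :: (d ++ [yc]))

/-- The image `f(E)` of a relation under `f`. -/
def fimg (f : X → Y) (E : Set (X × X)) : Set (Y × Y) := Prod.map f f '' E

/-- A generalized (uniform) path from `x` to `y`. -/
structure GenPath (X : Type u) [UniformSpace X] (x y : X) where
  c : Set (X × X) → List X
  chain : ∀ E ∈ 𝓤 X, IsEChain E (c E)
  head : ∀ E ∈ 𝓤 X, (c E).head? = some x
  last : ∀ E ∈ 𝓤 X, (c E).getLast? = some y
  compat : ∀ E ∈ 𝓤 X, ∀ F ∈ 𝓤 X, F ⊆ E → RipsHtpy E (c F) (c E)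

/-- A generalized path is `E`-short if its `E`-term is the edge `e(x,y)`. -/
def GenPath.EShort [UniformSpace X] {x y : X} (p : GenPath X x y) (E : Set (X × X)) : Prop :=
  (x, y) ∈ E ∧ RipsHtpy E (p.c E) [x, y]

/-- `X` is joinable: any two points are joined by a generalized path. -/
def Joinable (X : Type u) [UniformSpace X] : Prop :=
  ∀ x y : X, Nonempty (GenPath X x y)

/-- `X` is uniformly joinable. -/
def UniformlyJoinable (X : Type u) [UniformSpace X] : Prop :=
  ∀ E ∈ 𝓤 X, ∃ F ∈ 𝓤 X, ∀ x y : X, (x, y) ∈ F → ∃ p : GenPath X x y, p.EShort E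

/-- `X` is chain connected. -/
def ChainConnected (X : Type u) [UniformSpace X] : Prop :=
  ∀ E ∈ 𝓤 X, ∀ x y : X, ∃ l : List X,
    IsEChain E l ∧ l.head? = some x ∧ l.getLast? = some y

/-- `f` generates the uniform structure of `Y`. -/
def GeneratesUS [UniformSpace X] [UniformSpace Y] (f : X → Y) : Prop :=
  (∀ S ∈ 𝓤 Y, ∃ E ∈ 𝓤 X, fimg f E ⊆ S) ∧ ∀ E ∈ 𝓤 X, fimg f E ∈ 𝓤 Y

theorem RipsHtpy.map {E : Set (X × X)} {E' : Set (Y × Y)} (f : X → Y)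
    (h : ∀ a b : X, (a, b) ∈ E → (f a, f b) ∈ E') :
    ∀ {l₁ l₂ : List X}, RipsHtpy E l₁ l₂ → RipsHtpy E' (l₁.map f) (l₂.map f) := by
  intro l₁ l₂ H
  induction H with
  | refl l => exact .refl _
  | symm _ ih => exact .symm ih
  | trans _ _ ih₁ ih₂ => exact .trans ih₁ ih₂
  | ins l₁ l₂ a v b h₁ h₂ h₃ =>
      simpa using RipsHtpy.ins (l₁.map f) (l₂.map f) (f a) (f v) (f b)
        (h a v h₁) (h v b h₂) (h a b h₃)

theorem GeneratesUS.preimage [UniformSpace X] [UniformSpace Y] {f : X → Y}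
    (hf : GeneratesUS f) : ∀ S ∈ 𝓤 Y, Prod.map f f ⁻¹' S ∈ 𝓤 X := by
  intro S hS
  obtain ⟨E, hE, hES⟩ := hf.1 S hS
  exact Filter.mem_of_superset hE fun p hp => hES ⟨p, hp, rfl⟩

/-- The pushforward of a generalized path along a map inducing the uniformity. -/
def GenPath.map [UniformSpace X] [UniformSpace Y] (f : X → Y)
    (hf : ∀ S ∈ 𝓤 Y, Prod.map f f ⁻¹' S ∈ 𝓤 X) {x y : X} (p : GenPath X x y) :
    GenPath Y (f x) (f y) where
  c := fun F => (p.c (Prod.map f f ⁻¹' F)).map f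
  chain := fun F hF => List.isChain_map_of_isChain f (fun a b hab => hab) (p.chain _ (hf F hF))
  head := fun F hF => by
    rw [List.head?_map, p.head _ (hf F hF)]; rfl
  last := fun F hF => by
    rw [List.getLast?_map, p.last _ (hf F hF)]; rfl
  compat := fun E hE F hF hFE =>
    RipsHtpy.map f (fun a b hab => hab)
      (p.compat _ (hf E hE) _ (hf F hF) (Set.preimage_mono hFE))

/-- The space of generalized paths starting at `x₀`. -/
def GPSpace (X : Type u) [UniformSpace X] (x₀ : X) := Σ y : X, GenPath X x₀ y

/-- The endpoint projection. -/
def GPSpace.endpoint [UniformSpace X] {x₀ : X} (c : GPSpace X x₀) : X := c.1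

/-- The basic entourage `E*` on `GP(X,x₀)`. -/
def EstarGP [UniformSpace X] (x₀ : X) (E : Set (X × X)) :
    Set (GPSpace X x₀ × GPSpace X x₀) :=
  { q | EHomotopic E (q.1.2.c E) (q.2.2.c E) }

/-- The induced map on spaces of generalized paths. -/
def gpMap [UniformSpace X] [UniformSpace Y] (f : X → Y)
    (hf : ∀ S ∈ 𝓤 Y, Prod.map f f ⁻¹' S ∈ 𝓤 X) (x₀ : X) :
    GPSpace X x₀ → GPSpace Y (f x₀) :=
  fun c => ⟨f c.1, c.2.map f hf⟩

/-- The image under the endpoint projection `π_X : GP(X,x₀) → X` of the basic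
entourage `E*`. -/
def piEstarGP [UniformSpace X] (x₀ : X) (E : Set (X × X)) : Set (X × X) :=
  (fun q : GPSpace X x₀ × GPSpace X x₀ => (q.1.endpoint, q.2.endpoint)) '' EstarGP x₀ E

namespace RipsHtpy

variable {E F : Set (X × X)}

instance : Trans (RipsHtpy E) (RipsHtpy E) (RipsHtpy E) := ⟨RipsHtpy.trans⟩

theorem mono (hEF : E ⊆ F) {l m : List X} (h : RipsHtpy E l m) : RipsHtpy F l m := by
  simpa using h.map id fun _ _ hab => hEF hab

theorem append_left (t : List X) {l m : List X} (h : RipsHtpy E l m) :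
    RipsHtpy E (t ++ l) (t ++ m) := by
  induction h with
  | refl l => exact .refl _
  | symm _ ih => exact ih.symm
  | trans _ _ ih₁ ih₂ => exact ih₁.trans ih₂
  | ins l₁ l₂ a v b h₁ h₂ h₃ => simpa using ins (t ++ l₁) l₂ a v b h₁ h₂ h₃

theorem append_right (t : List X) {l m : List X} (h : RipsHtpy E l m) :
    RipsHtpy E (l ++ t) (m ++ t) := by
  induction h with
  | refl l => exact .refl _
  | symm _ ih => exact ih.symm
  | trans _ _ ih₁ ih₂ => exact ih₁.trans ih₂
  | ins l₁ l₂ a v b h₁ h₂ h₃ => simpa using ins l₁ (l₂ ++ t) a v b h₁ h₂ h₃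

theorem reverse {l m : List X} (h : RipsHtpy E l m) :
    RipsHtpy (SetRel.inv E) l.reverse m.reverse := by
  induction h with
  | refl l => exact .refl _
  | symm _ ih => exact ih.symm
  | trans _ _ ih₁ ih₂ => exact ih₁.trans ih₂
  | ins l₁ l₂ a v b h₁ h₂ h₃ => simpa using ins l₂.reverse l₁.reverse b v a h₂ h₁ h₃

theorem cons_reverse_append_self [SetRel.IsRefl E] [SetRel.IsSymm E] {l : List X} {a b : X}
    (hl : IsEChain E l) (hb : l.getLast? = some b) (hab : (a, b) ∈ E) :
    RipsHtpy E (a :: (l.reverse ++ l)) [a, b] := by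
  induction hl with
  | nil => simp at hb
  | singleton x =>
    obtain rfl : x = b := by simpa using hb
    simpa using (ins [] [] a x x hab (SetRel.refl E x) hab).symm
  | @cons_cons x y l hxy _ ih =>
    -- the spike `y, x, x, y` at the turning point retracts to `y, y`
    have hxx := ins (a :: l.reverse ++ [y]) l x x y (SetRel.refl E x) hxy hxy
    have hxy' := ins (a :: l.reverse) l y x y (SetRel.symm E hxy) hxy (SetRel.refl E y)
    simp only [List.reverse_cons, List.append_assoc, List.cons_append, List.nil_append]
      at hxx hxy' ih ⊢
    exact hxx.symm.trans (hxy'.symm.trans (ih (by simpa using hb)))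

end RipsHtpy

namespace GenPath

variable [UniformSpace X] {x y z : X}

theorem c_ne_nil (p : GenPath X x y) {E : Set (X × X)} (hE : E ∈ 𝓤 X) : p.c E ≠ [] := by
  intro h
  simpa [h] using p.head E hE

protected def refl (x : X) : GenPath X x x where
  c _ := [x]
  chain _ _ := List.isChain_singleton x
  head _ _ := rfl
  last _ _ := rfl
  compat _ _ _ _ _ := .refl _

protected def trans (p : GenPath X x y) (q : GenPath X y z) : GenPath X x z where
  c E := p.c E ++ q.c E
  chain E hE := by
    refine List.isChain_append.mpr ⟨p.chain E hE, q.chain E hE, ?_⟩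
    simp only [p.last E hE, q.head E hE, Option.mem_some_iff]
    rintro _ rfl _ rfl
    exact refl_mem_uniformity hE
  head E hE := by rw [List.head?_append_of_ne_nil _ (p.c_ne_nil hE), p.head E hE]
  last E hE := by rw [List.getLast?_append_of_ne_nil _ (q.c_ne_nil hE), q.last E hE]
  compat E hE F hF hFE :=
    ((p.compat E hE F hF hFE).append_right _).trans ((q.compat E hE F hF hFE).append_left _)

protected def symm (p : GenPath X x y) : GenPath X y x where
  c E := (p.c (SetRel.inv E)).reverse
  chain E hE := List.isChain_reverse.mpr (p.chain _ (symm_le_uniformity hE))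
  head E hE := by rw [List.head?_reverse, p.last (SetRel.inv E) (symm_le_uniformity hE)]
  last E hE := by rw [List.getLast?_reverse, p.head (SetRel.inv E) (symm_le_uniformity hE)]
  compat E hE F hF hFE :=
    (p.compat _ (symm_le_uniformity hE) _ (symm_le_uniformity hF) (Set.preimage_mono hFE)).reverse

theorem EShort.mono {p : GenPath X x y} {E F : Set (X × X)} (hE : E ∈ 𝓤 X) (hEF : E ⊆ F)
    (hp : p.EShort E) : p.EShort F :=
  ⟨hEF hp.1, (p.compat F (mem_of_superset hE hEF) E hE hEF).symm.trans (hp.2.mono hEF)⟩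

theorem nonempty_of_isEChain {F : Set (X × X)}
    (hF : ∀ x y : X, (x, y) ∈ F → Nonempty (GenPath X x y)) {l : List X} (hl : IsEChain F l)
    (hx : l.head? = some x) (hy : l.getLast? = some y) : Nonempty (GenPath X x y) := by
  induction hl generalizing x with
  | nil => simp at hx
  | singleton u =>
    obtain rfl : u = x := by simpa using hx
    obtain rfl : u = y := by simpa using hy
    exact ⟨.refl u⟩
  | cons_cons huv _ ih =>
    obtain rfl := Option.some_inj.mp hx
    obtain ⟨p⟩ := hF _ _ huv
    obtain ⟨q⟩ := ih rfl (by simpa using hy)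
    exact ⟨p.trans q⟩

end GenPath

theorem UniformlyJoinable.joinable [UniformSpace X] (hX : UniformlyJoinable X)
    (hcc : ChainConnected X) : Joinable X := by
  obtain ⟨F, hF, hshort⟩ := hX Set.univ univ_mem
  intro x y
  obtain ⟨l, hl, hx, hy⟩ := hcc F hF x y
  exact GenPath.nonempty_of_isEChain (fun a b hab => ⟨(hshort a b hab).choose⟩) hl hx hy

section EstarGP

variable [UniformSpace X] {x₀ a b : X} {E : Set (X × X)}

theorem mem_estarGP_iff (hE : E ∈ 𝓤 X) {p : GenPath X x₀ a} {q : GenPath X x₀ b} :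
    ((⟨a, p⟩, ⟨b, q⟩) : GPSpace X x₀ × GPSpace X x₀) ∈ EstarGP x₀ E ↔
      (a, b) ∈ E ∧ RipsHtpy E (p.c E) (x₀ :: (q.c E ++ [a])) := by
  constructor
  · rintro ⟨xc, xd, yc, yd, hxc, -, hyc, hyd, -, hy, hpq⟩
    obtain rfl : x₀ = xc := Option.some_inj.mp ((p.head E hE).symm.trans hxc)
    obtain rfl : a = yc := Option.some_inj.mp ((p.last E hE).symm.trans hyc)
    obtain rfl : b = yd := Option.some_inj.mp ((q.last E hE).symm.trans hyd)
    exact ⟨hy, hpq⟩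
  · rintro ⟨hab, hpq⟩
    exact ⟨x₀, x₀, a, b, p.head E hE, q.head E hE, p.last E hE, q.last E hE,
      refl_mem_uniformity hE, hab, hpq⟩

theorem piEstarGP_subset (hE : E ∈ 𝓤 X) : piEstarGP x₀ E ⊆ E := by
  rintro _ ⟨⟨⟨a, p⟩, ⟨b, q⟩⟩, h, rfl⟩
  exact ((mem_estarGP_iff hE).mp h).1

/-- `q` is padded at `x₀` because a one-vertex edge-path admits no Rips move. -/
theorem trans_mem_estarGP_of_eShort (hE : E ∈ 𝓤 X) (q : GenPath X x₀ b) {p : GenPath X b a}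
    (hp : p.EShort E) (hab : (a, b) ∈ E) :
    ((⟨a, ((GenPath.refl x₀).trans q).trans p⟩, ⟨b, (GenPath.refl x₀).trans q⟩) :
      GPSpace X x₀ × GPSpace X x₀) ∈ EstarGP x₀ E := by
  have := isRefl_of_mem_uniformity hE
  refine (mem_estarGP_iff hE).mpr ⟨hab, ?_⟩
  obtain ⟨t, ht⟩ := List.head?_eq_some_iff.mp (q.head E hE)
  obtain ⟨s, hs⟩ := List.getLast?_eq_some_iff.mp (q.last E hE)
  show RipsHtpy E (x₀ :: q.c E ++ p.c E) (x₀ :: (x₀ :: q.c E ++ [a]))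
  calc RipsHtpy E (x₀ :: q.c E ++ p.c E) (x₀ :: q.c E ++ [b, a]) := hp.2.append_left _
    RipsHtpy E _ (x₀ :: q.c E ++ [a]) := by
      rw [hs]
      simpa using (RipsHtpy.ins (x₀ :: s) [] b b a (SetRel.refl E b) hp.1 hp.1).symm
    RipsHtpy E _ (x₀ :: (x₀ :: q.c E ++ [a])) := by
      rw [ht]
      simpa using RipsHtpy.ins [] (t ++ [a]) x₀ x₀ x₀ (SetRel.refl E x₀) (SetRel.refl E x₀)
        (SetRel.refl E x₀)

theorem eShort_symm_trans_of_mem_estarGP [SetRel.IsSymm E] (hE : E ∈ 𝓤 X) {p : GenPath X x₀ a}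
    {q : GenPath X x₀ b} (h : ((⟨a, p⟩, ⟨b, q⟩) : GPSpace X x₀ × GPSpace X x₀) ∈ EstarGP x₀ E) :
    (p.symm.trans ((GenPath.refl x₀).trans q)).EShort E := by
  have := isRefl_of_mem_uniformity hE
  obtain ⟨hab, hpq⟩ := (mem_estarGP_iff hE).mp h
  refine ⟨hab, ?_⟩
  have hq : IsEChain E (x₀ :: q.c E) := ((GenPath.refl x₀).trans q).chain E hE
  have hqb : (x₀ :: q.c E).getLast? = some b := ((GenPath.refl x₀).trans q).last E hE
  have hpq' : RipsHtpy E (p.c E).reverse (a :: (x₀ :: q.c E).reverse) := by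
    simpa [SetRel.inv_eq_self] using hpq.reverse
  show RipsHtpy E ((p.c (SetRel.inv E)).reverse ++ x₀ :: q.c E) [a, b]
  rw [SetRel.inv_eq_self]
  exact (hpq'.append_right _).trans (RipsHtpy.cons_reverse_append_self hq hqb hab)

end EstarGP

theorem UniformlyJoinable.piEstarGP_mem_uniformity [UniformSpace X] (hX : UniformlyJoinable X)
    {x₀ : X} (hjoin : ∀ y : X, Nonempty (GenPath X x₀ y)) {E : Set (X × X)} (hE : E ∈ 𝓤 X) :
    piEstarGP x₀ E ∈ 𝓤 X := by
  obtain ⟨F, hF, hshort⟩ := hX _ (symmetrize_mem_uniformity hE)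
  refine mem_of_superset (symm_le_uniformity hF) ?_
  rintro ⟨a, b⟩ hba
  obtain ⟨p, hp⟩ := hshort b a hba
  obtain ⟨q⟩ := hjoin b
  exact ⟨_, trans_mem_estarGP_of_eShort hE q (hp.mono (symmetrize_mem_uniformity hE)
    SetRel.symmetrize_subset_self) hp.1.2, rfl⟩

theorem UniformlyJoinable.of_piEstarGP_mem_uniformity [UniformSpace X] {x₀ : X}
    (h : ∀ E ∈ 𝓤 X, piEstarGP x₀ E ∈ 𝓤 X) : UniformlyJoinable X := by
  intro E hE
  have hV := symmetrize_mem_uniformity hE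
  refine ⟨_, h _ hV, ?_⟩
  rintro _ _ ⟨⟨⟨a, p⟩, ⟨b, q⟩⟩, hpq, ⟨⟩⟩
  exact ⟨_, (eShort_symm_trans_of_mem_estarGP hV hpq).mono hV SetRel.symmetrize_subset_self⟩

/-- For a chain connected uniform space, `X` is uniformly joinable iff the endpoint
projection `π_X : GP(X,x₀) → X` generates the uniform structure of `X`. -/
theorem uniformlyJoinable_iff_endpoint_generates [UniformSpace X] (x₀ : X)
    (hcc : ChainConnected X) :
    UniformlyJoinable X ↔
      ((∀ S ∈ 𝓤 X, ∃ E ∈ 𝓤 X, piEstarGP x₀ E ⊆ S) ∧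
        (∀ E ∈ 𝓤 X, piEstarGP x₀ E ∈ 𝓤 X)) :=
  ⟨fun hX => ⟨fun S hS => ⟨S, hS, piEstarGP_subset hS⟩,
      fun _ hE => hX.piEstarGP_mem_uniformity (hX.joinable hcc x₀) hE⟩,
    fun h => .of_piEstarGP_mem_uniformity h.2⟩
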